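/- For every integer c ≥ 1 and every integer n ≥ 5(c+1)², setting q = 3n − c and t = 3c, one has 1 ≤ t ≤ n − 1 and ((q + 2t)(q − n − 1)/n − 2q)·(n − t)/(4nt) > 2 − (q − n − 1)/n. (This is case 3) in the paper's list of situations where condition (*) holds, which yields the paper's Corollary 4 from Theorem 3 with p = 1.) -/

import Mathlib

/-! With `q = 3n - c` and `t = 3c`, clearing denominators turns (*) into
`12nc(c + 1) < (3n(3c - 1) - 5c(c + 1))(n - 3c)`. For `n ≥ 5(c + 1)²` the first factor on the
right is at least `5nc` and the second at least `n / 2`, which leaves a wide margin. -/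

def ConditionStar (n q t : ℝ) : Prop :=
  ((q + 2 * t) * (q - n - 1) / n - 2 * q) * (n - t) / (4 * n * t) > 2 - (q - n - 1) / n

theorem conditionStar_three_mul_sub_iff {n c : ℝ} (hn : 0 < n) (hc : 0 < c) :
    ConditionStar n (3 * n - c) (3 * c) ↔
      12 * n * c * (c + 1) < (3 * n * (3 * c - 1) - 5 * c * (c + 1)) * (n - 3 * c) := by
  have hdiff : ((3 * n - c + 2 * (3 * c)) * (3 * n - c - n - 1) / n - 2 * (3 * n - c)) *
        (n - 3 * c) / (4 * n * (3 * c)) - (2 - (3 * n - c - n - 1) / n) =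
      ((3 * n * (3 * c - 1) - 5 * c * (c + 1)) * (n - 3 * c) - 12 * n * c * (c + 1)) /
        (12 * n ^ 2 * c) := by
    field_simp
    ring
  rw [ConditionStar, gt_iff_lt, ← sub_pos, hdiff, div_pos_iff_of_pos_right (by positivity),
    sub_pos]

theorem conditionStar_three_mul_sub {n c : ℝ} (hc : 1 ≤ c) (hn : 5 * (c + 1) ^ 2 ≤ n) :
    ConditionStar n (3 * n - c) (3 * c) := by
  have hn_ge : 10 * (c + 1) ≤ n := by nlinarith
  have hn_pos : 0 < n := by linarith
  have hc_pos : 0 < c := by linarith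
  have hnc : 0 < n * c := by positivity
  rw [conditionStar_three_mul_sub_iff hn_pos hc_pos]
  have hfirst : 5 * n * c ≤ 3 * n * (3 * c - 1) - 5 * c * (c + 1) := by nlinarith
  have hsecond : n / 2 ≤ n - 3 * c := by linarith
  calc 12 * n * c * (c + 1)
      < 5 * n * c * (n / 2) := by nlinarith
    _ ≤ (3 * n * (3 * c - 1) - 5 * c * (c + 1)) * (n - 3 * c) := by
      gcongr
      linarith

/-- Case 3) of the paper's list: for `c ≥ 1`, `n ≥ 5(c + 1)²`, `q = 3n - c` and `t = 3c`,
one has `1 ≤ t ≤ n - 1` and condition (*) holds. -/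
theorem stmt_14 (c n q : ℕ) (hc : 1 ≤ c) (hn : 5 * (c + 1) ^ 2 ≤ n) (hq : q + c = 3 * n) :
    (1 ≤ 3 * c ∧ 3 * c ≤ n - 1) ∧
      (((q : ℝ) + 2 * (3 * c)) * ((q : ℝ) - n - 1) / n - 2 * q) *
          ((n : ℝ) - 3 * c) / (4 * n * (3 * c))
        > 2 - ((q : ℝ) - n - 1) / n := by
  have ht_succ_le : 3 * c + 1 ≤ 5 * (c + 1) ^ 2 := by nlinarith
  have hqR : (q : ℝ) = 3 * n - c := by
    rw [eq_sub_iff_add_eq]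
    exact_mod_cast hq
  refine ⟨⟨by omega, by omega⟩, ?_⟩
  rw [hqR]
  exact conditionStar_three_mul_sub (by exact_mod_cast hc) (by exact_mod_cast hn)
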